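/- arXiv:1203.0224 — 4 statements merged into one kernel-verified Lean document; each statement's English description precedes it below -/
import Mathlib

section
/- Let G = (A, B, E) be a bipartite Label Cover instance with |A| = |B| = n/2 in which every vertex has degree exactly d, with alphabets satisfying |Σ_A| ≥ |Σ_B| ≥ 2, and suppose that every labeling satisfies at most s·|E| edges, where 0 < s ≤ 1. Let 1 ≤ α ≤ 1/s and let G_α be the random subgraph of G obtained by keeping each edge independently with probability p_α = α·log₂|Σ_A| / d. Then for all sufficiently large n, with probability at least 2/3 the following holds: every labeling (γ_A, γ_B) satisfies at most a 4e/α fraction of the edges of G_α (where e is Euler's number). Moreover, if some labeling satisfies all edges of G, then with probability 1 that labeling satisfies all edges of G_α. -/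
open MeasureTheory

/-- The product Bernoulli(p) measure on subsets of a finite index type `ι`
(each coordinate kept independently with probability `p`, for `0 ≤ p ≤ 1`). -/
noncomputable def bernoulliProd (ι : Type) [Fintype ι] (p : ℝ) :
    Measure (ι → Bool) :=
  Measure.pi fun _ => (PMF.bernoulli (min (Real.toNNReal p) 1) (min_le_right _ _)).toMeasure

open ProbabilityTheory Finset
open scoped ENNReal Nat

/-!
Fix a labeling and write `L = log₂ |Σ_A|`. Its satisfied edges number at most `s |E|`, so the
expected number of them that survive is at most `s p |E| = s α L |A| ≤ L |A|`. Since
`C(N, k) p^k ≤ (e N p / k)^k`, the probability that at least `2e L |A|` of them survive is at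
most `2^(-2e L |A|)`, and a union bound over the at most `|Σ_A|^(2|A|) = 2^(2 L |A|)` labelings
bounds the probability that some labeling does so by `1/8`. The number of surviving edges is a
sum of independent indicators with mean `p |E| = α L |A| ≥ 24`, so by Chebyshev's inequality
it drops below half its mean with probability at most `4 / (α L |A|) ≤ 1/6`. Outside these two
events every labeling satisfies fewer than `2e L |A| < (4e/α) · #(surviving edges)` surviving
edges. A labeling satisfying all of `G` satisfies every subgraph of it.
-/

theorem Nat.choose_mul_pow_le_exp_mul_div_pow (N k : ℕ) {p : ℝ} (hp : 0 ≤ p) :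
    (N.choose k : ℝ) * p ^ k ≤ (Real.exp 1 * (N * p) / k) ^ k := by
  rcases k.eq_zero_or_pos with rfl | hk
  · simp
  have hfact : (0 : ℝ) < k ! := mod_cast k.factorial_pos
  have hpow_le : (k : ℝ) ^ k ≤ Real.exp 1 ^ k * k ! := by
    rw [Real.exp_one_pow, ← div_le_iff₀ hfact]
    exact Real.pow_div_factorial_le_exp _ k.cast_nonneg k
  calc (N.choose k : ℝ) * p ^ k ≤ (N : ℝ) ^ k / k ! * p ^ k := by
        gcongr; exact Nat.choose_le_pow_div k N
    _ = (N * p) ^ k / k ! := by rw [mul_pow]; ring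
    _ ≤ (Real.exp 1 * (N * p) / k) ^ k := by
        rw [div_pow, div_le_div_iff₀ hfact (by positivity)]
        calc (N * p : ℝ) ^ k * k ^ k ≤ (N * p) ^ k * (Real.exp 1 ^ k * k !) := by gcongr
          _ = (Real.exp 1 * (N * p)) ^ k * k ! := by ring

lemma natCast_le_two_rpow_logb (n : ℕ) : (n : ℝ) ≤ 2 ^ Real.logb 2 n := by
  rcases n.eq_zero_or_pos with rfl | hn
  · simp only [CharP.cast_eq_zero]; positivity
  · rw [Real.rpow_logb zero_lt_two (by norm_num) (mod_cast hn)]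

section BernoulliProd

variable {ι : Type} [Fintype ι] {p : ℝ}

instance : IsProbabilityMeasure (bernoulliProd ι p) := by
  unfold bernoulliProd; infer_instance

lemma bernoulliProd_forall_mem_eq_true (hp : p ≤ 1) (T : Finset ι) :
    bernoulliProd ι p {ω | ∀ i ∈ T, ω i = true} = ENNReal.ofReal p ^ #T := by
  have hcyl : {ω : ι → Bool | ∀ i ∈ T, ω i = true} = (T : Set ι).pi fun _ => {true} := by
    ext ω; simp
  rw [hcyl, bernoulliProd, Measure.pi_pi_finset]
  simp [ENNReal.ofReal, hp]
  rfl

lemma bernoulliProd_le_card_filter_le_choose (hp : p ≤ 1) (S : Finset ι) (k : ℕ) :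
    bernoulliProd ι p {ω | k ≤ #{i ∈ S | ω i}} ≤ (#S).choose k * ENNReal.ofReal p ^ k := by
  have hcover : {ω : ι → Bool | k ≤ #{i ∈ S | ω i}} ⊆
      ⋃ T ∈ S.powersetCard k, {ω | ∀ i ∈ T, ω i = true} := by
    intro ω hω
    obtain ⟨T, hTS, hT⟩ := Finset.exists_subset_card_eq hω
    exact Set.mem_iUnion₂.2 ⟨T, mem_powersetCard.2 ⟨hTS.trans (filter_subset _ _), hT⟩,
      fun i hi => (mem_filter.1 (hTS hi)).2⟩
  calc _ ≤ ∑ T ∈ S.powersetCard k, bernoulliProd ι p {ω | ∀ i ∈ T, ω i = true} :=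
        (measure_mono hcover).trans (measure_biUnion_finset_le _ _)
    _ = (#S).choose k * ENNReal.ofReal p ^ k := by
        rw [sum_congr rfl fun T hT => by
          rw [bernoulliProd_forall_mem_eq_true hp, (mem_powersetCard.1 hT).2]]
        simp

lemma bernoulliProd_le_card_filter_le_two_rpow_neg (hp0 : 0 ≤ p) (hp1 : p ≤ 1) (S : Finset ι)
    {t : ℝ} (ht : 2 * Real.exp 1 * (#S * p) ≤ t) :
    bernoulliProd ι p {ω | t ≤ #{i ∈ S | ω i}} ≤ ENNReal.ofReal (2 ^ (-t)) := by
  set k := ⌈t⌉₊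
  have hset : {ω : ι → Bool | t ≤ #{i ∈ S | ω i}} = {ω | k ≤ #{i ∈ S | ω i}} := by
    ext ω; simp [k, Nat.ceil_le]
  have hratio : Real.exp 1 * (#S * p) / k ≤ 1 / 2 := by
    rcases k.eq_zero_or_pos with hk | hk
    · simp [hk]
    rw [div_le_iff₀ (by exact_mod_cast hk)]
    linarith [Nat.le_ceil t]
  rw [hset]
  refine (bernoulliProd_le_card_filter_le_choose hp1 S k).trans ?_
  rw [← ENNReal.ofReal_natCast, ← ENNReal.ofReal_pow hp0, ← ENNReal.ofReal_mul (by positivity)]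
  refine ENNReal.ofReal_le_ofReal ?_
  calc ((#S).choose k : ℝ) * p ^ k ≤ (Real.exp 1 * (#S * p) / k) ^ k :=
        Nat.choose_mul_pow_le_exp_mul_div_pow _ _ hp0
    _ ≤ (1 / 2) ^ k := by gcongr
    _ = 2 ^ (-(k : ℝ)) := by rw [Real.rpow_neg zero_le_two, Real.rpow_natCast, one_div, inv_pow]
    _ ≤ 2 ^ (-t) := Real.rpow_le_rpow_of_exponent_le one_le_two (neg_le_neg (Nat.le_ceil t))

lemma bernoulliProd_exists_le_card_filter_le {Γ : Type*} [Fintype Γ] (hp0 : 0 ≤ p)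
    (hp1 : p ≤ 1) (S : Γ → Finset ι) {t : ℝ} (ht : ∀ γ, 2 * Real.exp 1 * (#(S γ) * p) ≤ t) :
    bernoulliProd ι p {ω | ∃ γ, t ≤ #{i ∈ S γ | ω i}} ≤
      ENNReal.ofReal (Fintype.card Γ * 2 ^ (-t)) := by
  rw [Set.ofPred_exists]
  calc _ ≤ ∑ γ, bernoulliProd ι p {ω | t ≤ #{i ∈ S γ | ω i}} := measure_iUnion_fintype_le _ _
    _ ≤ ∑ _ : Γ, ENNReal.ofReal (2 ^ (-t)) := sum_le_sum fun γ _ =>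
        bernoulliProd_le_card_filter_le_two_rpow_neg hp0 hp1 (S γ) (ht γ)
    _ = _ := by
        rw [sum_const, card_univ, nsmul_eq_mul, ENNReal.ofReal_mul (by positivity),
          ENNReal.ofReal_natCast]

lemma iIndepFun_ite_bernoulliProd :
    iIndepFun (fun i (ω : ι → Bool) => if ω i then (1 : ℝ) else 0) (bernoulliProd ι p) :=
  iIndepFun_pi (X := fun _ b => if b = true then (1 : ℝ) else 0) fun _ =>
    (measurable_of_countable _).aemeasurable

lemma integral_ite_bernoulliProd (hp0 : 0 ≤ p) (hp1 : p ≤ 1) (i : ι) :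
    ∫ ω, (if ω i then (1 : ℝ) else 0) ∂bernoulliProd ι p = p := by
  have hind : (fun ω : ι → Bool => if ω i then (1 : ℝ) else 0) =
      Set.indicator {ω | ∀ j ∈ ({i} : Finset ι), ω j = true} 1 := by
    ext ω; simp [Set.indicator]
  rw [hind, integral_indicator_one MeasurableSet.of_discrete, measureReal_def,
    bernoulliProd_forall_mem_eq_true hp1]
  simp [hp0]

lemma variance_card_filter_bernoulliProd_le (hp0 : 0 ≤ p) (hp1 : p ≤ 1) (S : Finset ι) :
    variance (fun ω => (#{i ∈ S | ω i} : ℝ)) (bernoulliProd ι p) ≤ p * #S := by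
  have hsum : (fun ω : ι → Bool => (#{i ∈ S | ω i} : ℝ)) =
      ∑ i ∈ S, fun ω => if ω i then (1 : ℝ) else 0 := by
    ext ω; rw [Finset.sum_apply, natCast_card_filter]
  rw [hsum, IndepFun.variance_sum (fun _ _ => MemLp.of_discrete)
    fun i _ j _ hij => iIndepFun_ite_bernoulliProd.indepFun hij]
  calc _ ≤ ∑ _ ∈ S, p := sum_le_sum fun i _ => by
        refine (variance_le_expectation_sq
          (measurable_of_countable _).aestronglyMeasurable).trans_eq ?_
        have hsq : (fun ω : ι → Bool => if ω i then (1 : ℝ) else 0) ^ 2 =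
            fun ω => if ω i then 1 else 0 := by
          ext ω; simp only [Pi.pow_apply]; split_ifs <;> norm_num
        rw [hsq, integral_ite_bernoulliProd hp0 hp1]
    _ = p * #S := by rw [sum_const, nsmul_eq_mul, mul_comm]

lemma integral_card_filter_bernoulliProd (hp0 : 0 ≤ p) (hp1 : p ≤ 1) (S : Finset ι) :
    ∫ ω, (#{i ∈ S | ω i} : ℝ) ∂bernoulliProd ι p = p * #S := by
  simp_rw [natCast_card_filter]
  rw [integral_finsetSum _ fun _ _ => Integrable.of_finite]
  simp [integral_ite_bernoulliProd hp0 hp1, mul_comm]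

lemma bernoulliProd_card_filter_le_half_le (hp0 : 0 < p) (hp1 : p ≤ 1) {S : Finset ι}
    (hS : S.Nonempty) :
    bernoulliProd ι p {ω | #{i ∈ S | ω i} ≤ p * #S / 2} ≤ ENNReal.ofReal (4 / (p * #S)) := by
  have hmean : 0 < p * #S := mul_pos hp0 (mod_cast hS.card_pos)
  set X := fun ω : ι → Bool => (#{i ∈ S | ω i} : ℝ)
  have hsub : {ω | X ω ≤ p * #S / 2} ⊆
      {ω | p * #S / 2 ≤ |X ω - (bernoulliProd ι p)[X]|} := by
    intro ω hω
    simp only [Set.mem_ofPred_eq, X, integral_card_filter_bernoulliProd hp0.le hp1] at hω ⊢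
    rw [abs_sub_comm]
    exact (by linarith : p * #S / 2 ≤ p * #S - X ω).trans (le_abs_self _)
  refine (measure_mono hsub).trans <|
    (meas_ge_le_variance_div_sq MemLp.of_discrete (by positivity)).trans <|
    ENNReal.ofReal_le_ofReal ?_
  calc variance X (bernoulliProd ι p) / (p * #S / 2) ^ 2 ≤ p * #S / (p * #S / 2) ^ 2 := by
        gcongr; exact variance_card_filter_bernoulliProd_le hp0.le hp1 S
    _ = 4 / (p * #S) := by field_simp; ring

theorem bernoulliProd_forall_card_filter_le_mul {Γ : Type*} [Fintype Γ] (hp0 : 0 < p)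
    (hp1 : p ≤ 1) {E : Finset ι} (hE : 24 ≤ p * #E) (S : Γ → Finset ι) {x : ℝ}
    (hS : ∀ γ, #(S γ) * p ≤ x) (hΓ : Real.logb 2 (Fintype.card Γ) + 3 ≤ 2 * Real.exp 1 * x) :
    2 / 3 ≤ bernoulliProd ι p {ω | ∀ γ, (#{i ∈ S γ | ω i} : ℝ) ≤
      4 * Real.exp 1 * x / (p * #E) * #{i ∈ E | ω i}} := by
  have hEpos : 0 < p * #E := by linarith
  set few := {ω : ι → Bool | #{i ∈ E | ω i} ≤ p * #E / 2}
  set many := {ω : ι → Bool | ∃ γ, 2 * Real.exp 1 * x ≤ #{i ∈ S γ | ω i}}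
  have hfew : bernoulliProd ι p few ≤ ENNReal.ofReal (1 / 6) := by
    have hE : E.Nonempty := card_pos.1 (by exact_mod_cast pos_of_mul_pos_right hEpos hp0.le)
    refine (bernoulliProd_card_filter_le_half_le hp0 hp1 hE).trans (ENNReal.ofReal_le_ofReal ?_)
    rw [div_le_div_iff₀ hEpos (by norm_num)]
    linarith
  have hmany : bernoulliProd ι p many ≤ ENNReal.ofReal (1 / 6) := by
    refine (bernoulliProd_exists_le_card_filter_le hp0.le hp1 S fun γ =>
      mul_le_mul_of_nonneg_left (hS γ) (by positivity)).trans (ENNReal.ofReal_le_ofReal ?_)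
    calc Fintype.card Γ * (2 : ℝ) ^ (-(2 * Real.exp 1 * x))
        ≤ 2 ^ Real.logb 2 (Fintype.card Γ) * 2 ^ (-(2 * Real.exp 1 * x)) := by
          gcongr; exact natCast_le_two_rpow_logb _
      _ = 2 ^ (Real.logb 2 (Fintype.card Γ) - 2 * Real.exp 1 * x) := by
          rw [← Real.rpow_add zero_lt_two, sub_eq_add_neg]
      _ ≤ 2 ^ (-3 : ℝ) := Real.rpow_le_rpow_of_exponent_le one_le_two (by linarith)
      _ ≤ 1 / 6 := by norm_num
  have hgood : (few ∪ many)ᶜ ⊆ {ω | ∀ γ, (#{i ∈ S γ | ω i} : ℝ) ≤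
      4 * Real.exp 1 * x / (p * #E) * #{i ∈ E | ω i}} := by
    intro ω hω γ
    simp only [few, many, Set.compl_union, Set.mem_inter_iff, Set.mem_compl_iff,
      Set.mem_ofPred_eq, not_le, not_exists] at hω
    have hp : p ≠ 0 := hp0.ne'
    have hE : (#E : ℝ) ≠ 0 := right_ne_zero_of_mul hEpos.ne'
    have hx : 0 ≤ x := (by positivity : (0 : ℝ) ≤ #(S γ) * p).trans (hS γ)
    calc (#{i ∈ S γ | ω i} : ℝ) ≤ 2 * Real.exp 1 * x := (hω.2 γ).le
      _ = 4 * Real.exp 1 * x / (p * #E) * (p * #E / 2) := by field_simp; ring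
      _ ≤ _ := by gcongr; exact hω.1.le
  calc (2 / 3 : ℝ≥0∞) = 1 - ENNReal.ofReal (1 / 6 + 1 / 6) := by
        rw [← ENNReal.ofReal_one, ← ENNReal.ofReal_sub _ (by norm_num),
          show (1 : ℝ) - (1 / 6 + 1 / 6) = 2 / 3 by norm_num,
          ENNReal.ofReal_div_of_pos (by norm_num)]
        norm_num
    _ ≤ 1 - bernoulliProd ι p (few ∪ many) := by
        gcongr
        rw [ENNReal.ofReal_add (by norm_num) (by norm_num)]
        exact (measure_union_le _ _).trans (add_le_add hfew hmany)
    _ = bernoulliProd ι p (few ∪ many)ᶜ := (prob_compl_eq_one_sub .of_discrete).symm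
    _ ≤ _ := measure_mono hgood

end BernoulliProd

lemma Finset.card_eq_mul_card_of_forall_card_filter_fst_eq {A B : Type} [Fintype A]
    [DecidableEq A] {E : Finset (A × B)} {d : ℕ} (hd : ∀ a, #{f ∈ E | f.1 = a} = d) :
    #E = d * Fintype.card A := by
  rw [card_eq_sum_card_fiberwise fun f _ => mem_univ f.1, sum_congr rfl fun a _ => hd a,
    sum_const, card_univ, smul_eq_mul, mul_comm]

lemma logb_card_labelings_le {A B SA SB : Type} [Fintype A] [Fintype B] [Fintype SA]
    [Fintype SB] [DecidableEq A] [DecidableEq B] (hSB : 0 < Fintype.card SB)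
    (hSBA : Fintype.card SB ≤ Fintype.card SA) :
    Real.logb 2 (Fintype.card ((A → SA) × (B → SB))) ≤
      Real.logb 2 (Fintype.card SA) * (Fintype.card A + Fintype.card B) := by
  have hcard : Fintype.card ((A → SA) × (B → SB)) ≤
      Fintype.card SA ^ (Fintype.card A + Fintype.card B) := by
    rw [Fintype.card_prod, Fintype.card_fun, Fintype.card_fun, pow_add]
    gcongr
  have : Nonempty SB := Fintype.card_pos_iff.1 hSB
  have : Nonempty SA := Fintype.card_pos_iff.1 (hSB.trans_le hSBA)
  calc Real.logb 2 (Fintype.card ((A → SA) × (B → SB)))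
      ≤ Real.logb 2 ((Fintype.card SA ^ (Fintype.card A + Fintype.card B) : ℕ) : ℝ) :=
        Real.logb_le_logb_of_le one_lt_two (mod_cast Fintype.card_pos) (mod_cast hcard)
    _ = _ := by push_cast; rw [Real.logb_pow, mul_comm]; norm_cast

theorem bernoulliProd_labelCover_soundness {A B SA SB : Type} [Fintype A] [Fintype B]
    [Fintype SA] [Fintype SB] [DecidableEq A] [DecidableEq B] [DecidableEq SA] [DecidableEq SB]
    {E : Finset (A × B)} {π : A × B → Finset (SA × SB)} {s α p : ℝ}
    (hBA : Fintype.card B = Fintype.card A) (hSB : 0 < Fintype.card SB)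
    (hSBA : Fintype.card SB ≤ Fintype.card SA)
    (hsound : ∀ (γA : A → SA) (γB : B → SB), (#{f ∈ E | (γA f.1, γB f.2) ∈ π f} : ℝ) ≤ s * #E)
    (hsα : s * α ≤ 1) (hα : 1 ≤ α) (hp0 : 0 < p) (hp1 : p ≤ 1)
    (hpE : p * #E = α * (Real.logb 2 (Fintype.card SA) * Fintype.card A))
    (hLA : 24 ≤ Real.logb 2 (Fintype.card SA) * Fintype.card A) :
    2 / 3 ≤ bernoulliProd (A × B) p {ω | ∀ (γA : A → SA) (γB : B → SB),
      (#{f ∈ {f ∈ E | ω f} | (γA f.1, γB f.2) ∈ π f} : ℝ) ≤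
        4 * Real.exp 1 / α * #{f ∈ E | ω f}} := by
  set x := Real.logb 2 (Fintype.card SA) * Fintype.card A
  have key := bernoulliProd_forall_card_filter_le_mul hp0 hp1 (by nlinarith)
    (fun γ : (A → SA) × (B → SB) => {f ∈ E | (γ.1 f.1, γ.2 f.2) ∈ π f}) (x := x)
    (fun γ => ?_) ?_
  · rw [hpE, mul_div_mul_right _ _ (by positivity : x ≠ 0)] at key
    convert key using 2
    ext ω
    simp only [Set.mem_ofPred_eq, Prod.forall, filter_filter, and_comm]
  · calc (#{f ∈ E | (γ.1 f.1, γ.2 f.2) ∈ π f} : ℝ) * p ≤ s * #E * p := by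
          gcongr; exact hsound γ.1 γ.2
      _ = s * α * x := by rw [mul_assoc, mul_comm (#E : ℝ), hpE]; ring
      _ ≤ x := by nlinarith
  · have hlog := logb_card_labelings_le (A := A) (B := B) hSB hSBA
    rw [hBA] at hlog
    nlinarith [Real.add_one_le_exp 1]

/-- subsampling a regular Label Cover instance with soundness `s` with edge
probability `p_α = α·log₂|Σ_A|/d` (for `1 ≤ α ≤ 1/s`) yields, with probability at least
`2/3`, an instance where every labeling satisfies at most a `4e/α` fraction of the
surviving edges; moreover a perfect labeling of `G` stays perfect with probability 1. -/
theorem subsampled_labelCover_soundness :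
    ∃ N : ℕ, ∀ n : ℕ, N ≤ n →
    ∀ (A B SA SB : Type) [Fintype A] [Fintype B] [Fintype SA] [Fintype SB]
      [DecidableEq A] [DecidableEq B] [DecidableEq SA] [DecidableEq SB]
      (E : Finset (A × B)) (π : A × B → Finset (SA × SB)) (d : ℕ) (s α : ℝ),
      2 * Fintype.card A = n → 2 * Fintype.card B = n →
      (∀ a : A, (E.filter fun f => f.1 = a).card = d) →
      (∀ b : B, (E.filter fun f => f.2 = b).card = d) →
      2 ≤ Fintype.card SB → Fintype.card SB ≤ Fintype.card SA →
      (∀ f ∈ E, (π f).Nonempty) →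
      0 < s → s ≤ 1 →
      (∀ (γA : A → SA) (γB : B → SB),
        ((E.filter fun f => (γA f.1, γB f.2) ∈ π f).card : ℝ) ≤ s * E.card) →
      1 ≤ α → α ≤ 1 / s →
      α * Real.logb 2 (Fintype.card SA) / d ≤ 1 →
      -- with probability at least 2/3, every labeling satisfies at most a 4e/α
      -- fraction of the sampled edges
      ((2 / 3 : ENNReal) ≤
        bernoulliProd (A × B) (α * Real.logb 2 (Fintype.card SA) / d)
          {ω | ∀ (γA : A → SA) (γB : B → SB),
            (((E.filter fun f => ω f).filter fun f => (γA f.1, γB f.2) ∈ π f).card : ℝ)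
              ≤ 4 * Real.exp 1 / α * (E.filter fun f => ω f).card}) ∧
      -- a perfect labeling stays perfect with probability 1
      (∀ (γA : A → SA) (γB : B → SB), (∀ f ∈ E, (γA f.1, γB f.2) ∈ π f) →
        bernoulliProd (A × B) (α * Real.logb 2 (Fintype.card SA) / d)
          {ω | ∀ f ∈ E.filter fun f => ω f, (γA f.1, γB f.2) ∈ π f} = 1) := by
  refine ⟨48, fun n hn A B SA SB _ _ _ _ _ _ _ _ E π d s α hA hB hdA _ hSB hSBA _ hs _ hsound
    hα hαs hp1 => ⟨?_, fun γA γB hγ => ?_⟩⟩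
  · have hL : 1 ≤ Real.logb 2 (Fintype.card SA) := by
      rw [Real.le_logb_iff_rpow_le one_lt_two (mod_cast (by omega : 0 < Fintype.card SA)),
        Real.rpow_one]
      exact_mod_cast hSB.trans hSBA
    have hEcard := card_eq_mul_card_of_forall_card_filter_fst_eq hdA
    rcases d.eq_zero_or_pos with rfl | hd
    · rw [zero_mul, card_eq_zero] at hEcard
      simpa [hEcard] using ENNReal.div_le_of_le_mul (by norm_num)
    have hA24 : (24 : ℝ) ≤ Fintype.card A := by exact_mod_cast (by omega : 24 ≤ Fintype.card A)
    refine bernoulliProd_labelCover_soundness (by omega) (by omega) hSBA hsound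
      ((le_div_iff₀' hs).1 hαs) hα (div_pos (by nlinarith) (by exact_mod_cast hd)) hp1 ?_
      (by nlinarith)
    rw [hEcard]; push_cast; field_simp
  · exact (congrArg _ (Set.eq_univ_of_forall fun ω f hf => hγ f (mem_filter.1 hf).1)).trans
      measure_univ
end

section
/- Let G = (A, B, E) be a finite bipartite graph in which every vertex has degree at most d, let 0 < p ≤ 1 with p·d ≥ 2, and let G_p be the random subgraph of G obtained by keeping each edge independently with probability p. Fix an edge (u,v) ∈ E and an integer k ≥ 4. Then, conditioned on the event that (u,v) is an edge of G_p, the probability that (u,v) lies on a simple cycle of length at most k in G_p is at most 2(p·d)^{k−1}/d. -/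
open MeasureTheory

/-- The random subgraph of `G` determined by a keep-function `ω` on (potential) edges. -/
def keepG {V : Type} (G : SimpleGraph V) (ω : Sym2 V → Bool) : SimpleGraph V where
  Adj x y := G.Adj x y ∧ ω s(x, y)
  symm := ⟨fun x y ⟨h, hb⟩ => ⟨h.symm, by rwa [Sym2.eq_swap]⟩⟩
  loopless := ⟨fun x ⟨h, _⟩ => G.loopless.irrefl x h⟩

/-!
Condition on the edge `uv` being kept. A simple cycle of length `m + 1 ≤ k` through `uv` can
be rotated and oriented to read `u, v, …, u`, so it is the edge `uv` followed by a walk of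
length `m` from `v` to `u`; there are at most `d ^ (m - 1)` such walks, since the last step is
forced. The cycle survives with probability `p ^ (m + 1)`, i.e. `p ^ m` given `uv`, so a union
bound gives `∑_{2 ≤ m < k} (p d) ^ m / d`, and `p d ≥ 2` bounds this geometric sum by twice its
largest term.
-/

open Finset

theorem geom_sum_le_two_mul_pow {R : Type*} [Semiring R] [PartialOrder R] [IsOrderedRing R]
    {x : R} (hx : 2 ≤ x) : ∀ k : ℕ, ∑ i ∈ range k, x ^ i ≤ 2 * x ^ (k - 1)
  | 0 => by simp
  | 1 => by norm_num
  | k + 2 => by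
    have hx0 : 0 ≤ x := le_trans zero_le_two hx
    calc ∑ i ∈ range (k + 2), x ^ i = ∑ i ∈ range (k + 1), x ^ i + x ^ (k + 1) :=
          sum_range_succ _ _
      _ ≤ 2 * x ^ k + x ^ (k + 1) := add_le_add_left (geom_sum_le_two_mul_pow hx (k + 1)) _
      _ ≤ x * x ^ k + x ^ (k + 1) := by gcongr
      _ = 2 * x ^ (k + 2 - 1) := by rw [← pow_succ', two_mul]; rfl

theorem sum_Ico_pow_mul_pow_le {p d : ℝ} (hp : 0 ≤ p) (hpd : 2 ≤ p * d) (k : ℕ) :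
    ∑ m ∈ Ico 2 k, d ^ (m - 1) * p ^ (m + 1) ≤ p * (2 * (p * d) ^ (k - 1) / d) := by
  have hd : d ≠ 0 := by rintro rfl; norm_num at hpd
  have hpd0 : 0 ≤ p / d := div_nonneg hp (by nlinarith)
  have hterm : ∀ m ∈ Ico 2 k, d ^ (m - 1) * p ^ (m + 1) = p / d * (p * d) ^ m := by
    intro m hm
    obtain ⟨j, rfl⟩ : ∃ j, m = j + 1 := ⟨m - 1, by grind⟩
    rw [Nat.add_sub_cancel]
    field_simp
    ring
  calc ∑ m ∈ Ico 2 k, d ^ (m - 1) * p ^ (m + 1) = p / d * ∑ m ∈ Ico 2 k, (p * d) ^ m := by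
        rw [sum_congr rfl hterm, mul_sum]
    _ ≤ p / d * ∑ m ∈ range k, (p * d) ^ m := by
        refine mul_le_mul_of_nonneg_left ?_ hpd0
        exact sum_le_sum_of_subset_of_nonneg (fun m hm => mem_range.mpr (mem_Ico.mp hm).2)
          fun m _ _ => by positivity
    _ ≤ p / d * (2 * (p * d) ^ (k - 1)) :=
        mul_le_mul_of_nonneg_left (geom_sum_le_two_mul_pow hpd k) hpd0
    _ = p * (2 * (p * d) ^ (k - 1) / d) := by ring

theorem bernoulliProd_setOf_forall_mem_eq_true {ι : Type} [Fintype ι] {p : ℝ} (hp1 : p ≤ 1)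
    {l : List ι} (hl : l.Nodup) :
    bernoulliProd ι p {ω | ∀ e ∈ l, ω e = true} = ENNReal.ofReal p ^ l.length := by
  classical
  have hset : {ω : ι → Bool | ∀ e ∈ l, ω e = true}
      = Set.univ.pi fun e => if e ∈ l then {true} else Set.univ := by
    ext ω
    simp only [Set.mem_ofPred_eq, Set.mem_pi, Set.mem_univ, true_implies]
    refine forall_congr' fun e => ?_
    by_cases he : e ∈ l <;> simp [he]
  have hmin : min (Real.toNNReal p) 1 = Real.toNNReal p :=
    min_eq_left (Real.toNNReal_le_one.mpr hp1)
  rw [hset, bernoulliProd, Measure.pi_pi]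
  have hfactor : ∀ e, (PMF.bernoulli (min (Real.toNNReal p) 1) (min_le_right _ _)).toMeasure
      (if e ∈ l then {true} else Set.univ) = if e ∈ l then ENNReal.ofReal p else 1 := by
    intro e
    split_ifs
    · rw [PMF.toMeasure_apply_singleton _ _ (measurableSet_singleton _), PMF.bernoulli_apply, hmin]
      rfl
    · exact measure_univ
  simp only [hfactor, prod_ite, prod_const, one_pow, mul_one]
  congr 1
  rw [← List.toFinset_card_of_nodup hl]
  congr 1
  ext e
  simp

namespace SimpleGraph

variable {V : Type*} {G : SimpleGraph V}

theorem card_finsetWalkLength_succ_le [DecidableEq V] [LocallyFinite G] {d : ℕ}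
    (hdeg : ∀ w, G.degree w ≤ d) (n : ℕ) (x y : V) :
    #(G.finsetWalkLength (n + 1) x y) ≤ d ^ n := by
  induction n generalizing x with
  | zero =>
    refine card_le_one.mpr fun a ha b hb => ?_
    rw [mem_finsetWalkLength_iff] at ha hb
    cases a with | nil => simp at ha | cons ha' a =>
    cases b with | nil => simp at hb | cons hb' b =>
    simp only [Walk.length_cons, Nat.add_eq_right] at ha hb
    cases a with | cons => simp at ha | nil =>
    cases b with | cons => simp at hb | nil => rfl
  | succ n ih =>
    rw [finsetWalkLength]
    calc #(univ.biUnion _) ≤ ∑ w : G.neighborSet x, #(G.finsetWalkLength (n + 1) w y) :=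
          card_biUnion_le.trans (by simp only [card_map, le_refl])
      _ ≤ ∑ _w : G.neighborSet x, d ^ n := sum_le_sum fun w _ => ih w
      _ = G.degree x * d ^ n := by
          rw [sum_const, card_univ, card_neighborSet_eq_degree, smul_eq_mul]
      _ ≤ d ^ (n + 1) := by rw [pow_succ']; exact Nat.mul_le_mul_right _ (hdeg x)

namespace Walk

variable {u v w : V}

theorem IsCycle.snd_eq_or_penultimate_eq {c : G.Walk u u} (hc : c.IsCycle)
    (he : s(u, v) ∈ c.edges) : c.snd = v ∨ c.penultimate = v := by
  cases c with
  | nil => simp at he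
  | cons h q =>
    rw [edges_cons, List.mem_cons] at he
    rcases he with he | he
    · exact .inl (by rw [snd_cons, ← Sym2.congr_right.mp he])
    · have hq : q.IsPath := ((cons_isCycle_iff q h).mp hc).1
      right
      rw [penultimate_cons_of_not_nil _ _ (edges_eq_nil.not.mp (List.ne_nil_of_mem he))]
      exact (hq.eq_penultimate_of_mem_edges he).symm

theorem IsCycle.exists_cons_isCycle_of_mem_edges [DecidableEq V] {c : G.Walk w w}
    (hc : c.IsCycle) (h : G.Adj u v) (he : s(u, v) ∈ c.edges) :
    ∃ q : G.Walk v u, (cons h q).IsCycle ∧ (cons h q).length = c.length ∧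
      ∀ e ∈ (cons h q).edges, e ∈ c.edges := by
  have hu : u ∈ c.support := c.fst_mem_support_of_mem_edges he
  have hedges : ∀ e, e ∈ (c.rotate u hu).edges ↔ e ∈ c.edges :=
    fun e => (rotate_edges c u hu).mem_iff
  suffices ∃ c' : G.Walk u u, c'.IsCycle ∧ c'.snd = v ∧ c'.length = c.length ∧
      ∀ e ∈ c'.edges, e ∈ c.edges by
    obtain ⟨c', hc', rfl, hlen, hsub⟩ := this
    have hc'_eq : cons h c'.tail = c' := c'.cons_tail_eq hc'.not_nil
    exact ⟨c'.tail, by rwa [hc'_eq], by rwa [hc'_eq], by rwa [hc'_eq]⟩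
  rcases (hc.rotate hu).snd_eq_or_penultimate_eq ((hedges _).mpr he) with hv | hv
  · exact ⟨_, hc.rotate hu, hv, length_rotate .., fun e he => (hedges e).mp he⟩
  · refine ⟨_, (hc.rotate hu).reverse, by rw [snd_reverse, hv], by simp, fun e he => ?_⟩
    rw [edges_reverse, List.mem_reverse] at he
    exact (hedges e).mp he

end Walk

end SimpleGraph

open SimpleGraph

theorem mem_edgeSet_keepG {V : Type} {G : SimpleGraph V} {ω : Sym2 V → Bool} {e : Sym2 V} :
    e ∈ (keepG G ω).edgeSet ↔ e ∈ G.edgeSet ∧ ω e = true := by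
  induction e with
  | _ a b => rfl

theorem exists_cons_isCycle_of_isCycle_keepG {V : Type} [DecidableEq V] {G : SimpleGraph V}
    {ω : Sym2 V → Bool} {u v w : V} (huv : G.Adj u v) {c : (keepG G ω).Walk w w}
    (hc : c.IsCycle) (he : s(u, v) ∈ c.edges) :
    ∃ q : G.Walk v u, (Walk.cons huv q).IsCycle ∧ q.length + 1 = c.length ∧
      ∀ e ∈ (Walk.cons huv q).edges, ω e = true := by
  have hle : keepG G ω ≤ G := fun _ _ h => h.1
  obtain ⟨q, hq, hlen, hsub⟩ := (hc.mapLe hle).exists_cons_isCycle_of_mem_edges huv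
    (by rwa [Walk.edges_mapLe_eq_edges])
  refine ⟨q, hq, by simpa using hlen, fun e he => (mem_edgeSet_keepG (G := G)).mp ?_ |>.2⟩
  exact c.edges_subset_edgeSet (by simpa using hsub e he)

theorem bernoulliProd_edge_mem_short_cycle_le {V : Type} [Fintype V]
    {G : SimpleGraph V} [DecidableRel G.Adj] {d : ℕ} (hdeg : ∀ w, G.degree w ≤ d)
    {p : ℝ} (hp0 : 0 ≤ p) (hp1 : p ≤ 1) {u v : V} (huv : G.Adj u v) (k : ℕ) :
    bernoulliProd (Sym2 V) p {ω | ∃ (w : V) (c : (keepG G ω).Walk w w),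
        c.IsCycle ∧ c.length ≤ k ∧ s(u, v) ∈ c.edges}
      ≤ ENNReal.ofReal (∑ m ∈ Ico 2 k, (d : ℝ) ^ (m - 1) * p ^ (m + 1)) := by
  classical
  let cycles (m : ℕ) := (G.finsetWalkLength m v u).filter fun q => (Walk.cons huv q).IsCycle
  let kept (q : G.Walk v u) := {ω : Sym2 V → Bool | ∀ e ∈ (Walk.cons huv q).edges, ω e = true}
  have hcover : {ω | ∃ (w : V) (c : (keepG G ω).Walk w w),
      c.IsCycle ∧ c.length ≤ k ∧ s(u, v) ∈ c.edges}
        ⊆ ⋃ m ∈ Ico 2 k, ⋃ q ∈ cycles m, kept q := by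
    rintro ω ⟨w, c, hc, hlen, he⟩
    obtain ⟨q, hq, hqlen, hkept⟩ := exists_cons_isCycle_of_isCycle_keepG huv hc he
    have h3 := hq.three_le_length
    rw [Walk.length_cons] at h3
    simp only [Set.mem_iUnion, exists_prop, mem_Ico]
    exact ⟨q.length, ⟨by omega, by omega⟩, q,
      mem_filter.mpr ⟨mem_finsetWalkLength_iff.mpr rfl, hq⟩, hkept⟩
  have hkept : ∀ m, ∀ q ∈ cycles m,
      bernoulliProd (Sym2 V) p (kept q) = ENNReal.ofReal p ^ (m + 1) := by
    intro m q hq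
    obtain ⟨hlen, hq⟩ := mem_filter.mp hq
    rw [bernoulliProd_setOf_forall_mem_eq_true hp1 hq.edges_nodup, Walk.length_edges,
      Walk.length_cons, mem_finsetWalkLength_iff.mp hlen]
  have hcard : ∀ m ∈ Ico 2 k, #(cycles m) ≤ d ^ (m - 1) := by
    intro m hm
    obtain ⟨j, rfl⟩ : ∃ j, m = j + 1 := ⟨m - 1, by grind⟩
    exact (card_filter_le _ _).trans (card_finsetWalkLength_succ_le hdeg j v u)
  calc _ ≤ bernoulliProd (Sym2 V) p (⋃ m ∈ Ico 2 k, ⋃ q ∈ cycles m, kept q) :=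
        measure_mono hcover
    _ ≤ ∑ m ∈ Ico 2 k, ∑ q ∈ cycles m, bernoulliProd (Sym2 V) p (kept q) :=
        (measure_biUnion_finset_le _ _).trans (sum_le_sum fun m _ => measure_biUnion_finset_le _ _)
    _ = ∑ m ∈ Ico 2 k, #(cycles m) * ENNReal.ofReal p ^ (m + 1) := by
        refine sum_congr rfl fun m _ => ?_
        rw [sum_congr rfl (hkept m), sum_const, nsmul_eq_mul]
    _ ≤ ∑ m ∈ Ico 2 k, ((d ^ (m - 1) : ℕ) : ENNReal) * ENNReal.ofReal p ^ (m + 1) := by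
        gcongr with m hm
        exact hcard m hm
    _ = ENNReal.ofReal (∑ m ∈ Ico 2 k, (d : ℝ) ^ (m - 1) * p ^ (m + 1)) := by
        rw [ENNReal.ofReal_sum_of_nonneg fun m _ => by positivity]
        refine sum_congr rfl fun m _ => ?_
        rw [ENNReal.ofReal_mul (by positivity), ENNReal.ofReal_pow hp0, ← Nat.cast_pow,
          ENNReal.ofReal_natCast]

theorem edge_in_short_cycle_prob_general {V : Type} [Fintype V]
    (G : SimpleGraph V)
    (d : ℕ) (hdeg : ∀ w : V, (G.neighborSet w).ncard ≤ d)
    (p : ℝ) (hp0 : 0 < p) (hp1 : p ≤ 1) (hpd : 2 ≤ p * d)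
    (u v : V) (huv : G.Adj u v) (k : ℕ) :
    ProbabilityTheory.cond (bernoulliProd (Sym2 V) p) {ω | (keepG G ω).Adj u v}
      {ω | ∃ (w : V) (c : (keepG G ω).Walk w w),
          c.IsCycle ∧ c.length ≤ k ∧ s(u, v) ∈ c.edges}
      ≤ ENNReal.ofReal (2 * (p * d) ^ (k - 1) / d) := by
  classical
  have hdeg' : ∀ w, G.degree w ≤ d := fun w => by
    rw [← card_neighborSet_eq_degree, ← Nat.card_eq_fintype_card,
      Nat.card_coe_set_eq]
    exact hdeg w
  have hkept : {ω | (keepG G ω).Adj u v} = {ω | ∀ e ∈ [s(u, v)], ω e = true} := by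
    ext ω
    simp [keepG, huv]
  rw [ProbabilityTheory.cond_apply (Set.toFinite _).measurableSet, hkept,
    bernoulliProd_setOf_forall_mem_eq_true hp1 (List.nodup_singleton _), List.length_singleton,
    pow_one]
  calc _ ≤ (ENNReal.ofReal p)⁻¹ *
        ENNReal.ofReal (∑ m ∈ Ico 2 k, (d : ℝ) ^ (m - 1) * p ^ (m + 1)) := by
        gcongr
        exact (measure_mono Set.inter_subset_right).trans
          (bernoulliProd_edge_mem_short_cycle_le hdeg' hp0.le hp1 huv k)
    _ ≤ (ENNReal.ofReal p)⁻¹ * ENNReal.ofReal (p * (2 * (p * d) ^ (k - 1) / d)) := by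
        gcongr
        exact sum_Ico_pow_mul_pow_le hp0.le hpd k
    _ = _ := by
        rw [ENNReal.ofReal_mul hp0.le, ← mul_assoc,
          ENNReal.inv_mul_cancel (ENNReal.ofReal_pos.mpr hp0).ne' ENNReal.ofReal_ne_top, one_mul]

/-- in a bipartite graph of maximum degree at most `d`, after keeping each
edge independently with probability `p` (where `p·d ≥ 2`), the conditional probability
that a fixed surviving edge `(u,v)` lies on a simple cycle of length at most `k ≥ 4`
is at most `2(pd)^(k-1)/d`. -/
theorem edge_in_short_cycle_prob {V : Type} [Fintype V] [DecidableEq V]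
    (G : SimpleGraph V) (side : V → Bool)
    (hbip : ∀ x y : V, G.Adj x y → side x ≠ side y)
    (d : ℕ) (hdeg : ∀ w : V, (G.neighborSet w).ncard ≤ d)
    (p : ℝ) (hp0 : 0 < p) (hp1 : p ≤ 1) (hpd : 2 ≤ p * d)
    (u v : V) (huv : G.Adj u v) (k : ℕ) (hk : 4 ≤ k) :
    ProbabilityTheory.cond (bernoulliProd (Sym2 V) p) {ω | (keepG G ω).Adj u v}
      {ω | ∃ (w : V) (c : (keepG G ω).Walk w w),
          c.IsCycle ∧ c.length ≤ k ∧ s(u, v) ∈ c.edges}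
      ≤ ENNReal.ofReal (2 * (p * d) ^ (k - 1) / d) :=
  edge_in_short_cycle_prob_general G d hdeg p hp0 hp1 hpd u v huv k
end

section
/- There is an absolute constant C > 0 such that the following holds. Let G = (A, B, E) be a bipartite graph with |A| = |B| = n/2 in which every vertex has degree exactly d, let Σ_A be an alphabet with |Σ_A| ≥ 2, let k ≥ 4 be an integer, let 16·log₂ n ≤ α ≤ d^{1/k}/log₂|Σ_A|, and let G_α be the random subgraph of G obtained by keeping each edge independently with probability p_α = α·log₂|Σ_A|/d. Then for all sufficiently large n, with probability greater than 2/3 the number of edges of G_α that lie on some simple cycle of length at most k in G_α is at most C·n·(α·log₂|Σ_A|)^k / d, which is at most C·n. -/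
/-!
A sampled edge `ab` that lies on a cycle of length at most `k` closes a path `b → a` of some
length `m + 1 ≤ k - 1` in `G` into a cycle whose `m + 2` edges were all kept, which happens with
probability `p ^ (m + 2)`; in a `d`-regular graph there are at most `d ^ m` walks of length
`m + 1` between two given vertices. Summing over the `nd/2` edges of `G`, the expected number of
bad edges is at most `(nd/2) ∑ₘ dᵐ pᵐ⁺² ≤ n xᵏ / d` where `x = pd = α log₂|Σ_A| ≥ 2`, so Markov's
inequality gives the bound with `C = 8`; the second inequality is `xᵏ ≤ d`.
-/

open MeasureTheory

open Finset SimpleGraph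

namespace SimpleGraph

variable {V : Type*} {G : SimpleGraph V}

namespace Walk

lemma IsCycle.exists_cons_of_mem_edges_of_start {x y : V} {c : G.Walk x x} (hc : c.IsCycle)
    (he : s(x, y) ∈ c.edges) :
    ∃ (h : G.Adj x y) (q : G.Walk y x), (cons h q).IsCycle ∧ (cons h q).length = c.length := by
  have cons_of_snd : ∀ c' : G.Walk x x, c'.IsCycle → y = c'.snd →
      ∃ (h : G.Adj x y) (q : G.Walk y x), (cons h q).IsCycle ∧ (cons h q).length = c'.length := by
    intro c' hc' hy
    cases c' with
    | nil => exact absurd hc' not_isCycle_nil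
    | cons h q =>
      rw [snd_cons] at hy
      subst hy
      exact ⟨h, q, hc', rfl⟩
  obtain hy | hy : y = c.snd ∨ y = c.reverse.snd := by
    cases c with
    | nil => simp at he
    | cons h q =>
      rw [edges_cons, List.mem_cons] at he
      rcases he with he | he
      · exact .inl ((Sym2.congr_right.mp he).trans (snd_cons q h).symm)
      · have hq : ¬ q.Nil := fun hn => by simp [edges_eq_nil.mpr hn] at he
        refine .inr ?_
        rw [snd_reverse, penultimate_cons_of_not_nil _ _ hq]
        exact ((cons_isCycle_iff q h).mp hc).1.eq_penultimate_of_mem_edges (Sym2.eq_swap ▸ he)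
  · exact cons_of_snd c hc hy
  · simpa using cons_of_snd c.reverse hc.reverse hy

lemma IsCycle.exists_cons_of_mem_edges [DecidableEq V] {w a b : V} {c : G.Walk w w}
    (hc : c.IsCycle) (he : s(a, b) ∈ c.edges) :
    ∃ (h : G.Adj a b) (q : G.Walk b a), (cons h q).IsCycle ∧ (cons h q).length = c.length := by
  have ha := c.fst_mem_support_of_mem_edges he
  simpa using (hc.rotate ha).exists_cons_of_mem_edges_of_start
    ((rotate_edges c a ha).mem_iff.mpr he)

end Walk

lemma card_finsetWalkLength_succ_le_s4 [DecidableEq V] [G.LocallyFinite] {d : ℕ}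
    (hG : G.IsRegularOfDegree d) (n : ℕ) (u v : V) :
    #(G.finsetWalkLength (n + 1) u v) ≤ d ^ n := by
  induction n generalizing u with
  | zero =>
    refine card_le_one.mpr fun p hp q hq => ?_
    rw [mem_finsetWalkLength_iff] at hp hq
    rcases p with _ | ⟨_, _ | ⟨_, _⟩⟩ <;> simp at hp
    rcases q with _ | ⟨_, _ | ⟨_, _⟩⟩ <;> simp at hq
    rfl
  | succ n ih =>
    rw [finsetWalkLength]
    calc _ ≤ ∑ w : G.neighborSet u, #((G.finsetWalkLength (n + 1) w v).map _) := card_biUnion_le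
      _ ≤ ∑ _w : G.neighborSet u, d ^ n := sum_le_sum fun w _ => (card_map _).trans_le (ih w)
      _ = d ^ (n + 1) := by
        rw [sum_const, card_univ, card_neighborSet_eq_degree, hG u, smul_eq_mul, pow_succ']

lemma IsRegularOfDegree.two_mul_card_edgeFinset [Fintype V] [DecidableRel G.Adj] {d : ℕ}
    (hG : G.IsRegularOfDegree d) : 2 * #G.edgeFinset = Fintype.card V * d := by
  rw [← sum_degrees_eq_twice_card_edges, sum_congr rfl fun v _ => hG v, sum_const, card_univ,
    smul_eq_mul]

end SimpleGraph

section Bernoulli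

variable {ι : Type} [Fintype ι]

instance (p : ℝ) : IsProbabilityMeasure (bernoulliProd ι p) := by
  unfold bernoulliProd; infer_instance

lemma bernoulliProd_real_setOf_forall_mem_eq_true {p : ℝ} (hp0 : 0 ≤ p) (hp1 : p ≤ 1)
    (T : Finset ι) : (bernoulliProd ι p).real {ω | ∀ i ∈ T, ω i = true} = p ^ #T := by
  have hset : {ω : ι → Bool | ∀ i ∈ T, ω i = true} = (T : Set ι).pi fun _ => {true} := by
    ext; simp
  rw [measureReal_def, hset, bernoulliProd, Measure.pi_pi_finset, prod_const,
    PMF.toMeasure_apply_singleton _ _ (measurableSet_singleton _)]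
  change ((min p.toNNReal 1 : NNReal) : ENNReal).toReal ^ #T = p ^ #T
  simp [hp0, hp1]

end Bernoulli

lemma two_thirds_lt_measure_le_of_three_mul_integral_lt {Ω : Type*} [MeasurableSpace Ω]
    {μ : Measure Ω} [IsProbabilityMeasure μ] {X : Ω → ℝ} (hX : 0 ≤ X) (hXi : Integrable X μ)
    {c : ℝ} (hc : 3 * ∫ ω, X ω ∂μ < c) : (2 / 3 : ENNReal) < μ {ω | X ω ≤ c} := by
  have hc0 : 0 < c := by linarith [integral_nonneg (μ := μ) hX]
  have hmarkov : c * μ.real {ω | c ≤ X ω} ≤ ∫ ω, X ω ∂μ :=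
    mul_meas_ge_le_integral_of_nonneg (Filter.Eventually.of_forall hX) hXi c
  have htail : μ.real {ω | c < X ω} < 1 / 3 := by
    have : μ.real {ω | c < X ω} ≤ μ.real {ω | c ≤ X ω} :=
      measureReal_mono fun ω (h : c < X ω) => show c ≤ X ω from h.le
    rw [lt_div_iff₀ (by norm_num)]
    nlinarith
  have hcover : 1 ≤ μ.real {ω | X ω ≤ c} + μ.real {ω | c < X ω} := by
    rw [← probReal_univ (μ := μ)]
    refine (measureReal_mono fun ω _ => ?_).trans (measureReal_union_le _ _)
    exact le_or_gt (X ω) c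
  rw [← ofReal_measureReal, show (2 / 3 : ENNReal) = ENNReal.ofReal (2 / 3) by
    rw [ENNReal.ofReal_div_of_pos] <;> norm_num]
  exact (ENNReal.ofReal_lt_ofReal_iff_of_nonneg (by norm_num)).mpr (by linarith)

lemma sum_range_pow_mul_div_pow_le {x D : ℝ} (hx : 2 ≤ x) (hD : 0 < D) {k : ℕ} (hk : 2 ≤ k) :
    ∑ m ∈ range (k - 1), D ^ m * (x / D) ^ (m + 2) ≤ 2 * x ^ k / D ^ 2 := by
  have hgeom : ∀ K : ℕ, ∑ m ∈ range (K + 1), x ^ m ≤ 2 * x ^ K := by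
    intro K
    induction K with
    | zero => simp
    | succ K ih =>
      rw [sum_range_succ, pow_succ]
      nlinarith [pow_nonneg (show 0 ≤ x by linarith) K]
  obtain ⟨K, rfl⟩ : ∃ K, k = K + 2 := ⟨k - 2, by omega⟩
  calc ∑ m ∈ range (K + 2 - 1), D ^ m * (x / D) ^ (m + 2)
      = (∑ m ∈ range (K + 1), x ^ m) * x ^ 2 / D ^ 2 := by
        rw [show K + 2 - 1 = K + 1 by omega, sum_mul, sum_div]
        refine sum_congr rfl fun m _ => ?_
        rw [div_pow, pow_add x, pow_add D]
        field_simp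
    _ ≤ 2 * x ^ K * x ^ 2 / D ^ 2 := by gcongr; exact hgeom K
    _ = 2 * x ^ (K + 2) / D ^ 2 := by ring

section RandomSubgraph

variable {V : Type} {G : SimpleGraph V}

-- The bad edges of `H`, exactly as in the statement of `few_bad_edges`.
def shortCycleEdges (H : SimpleGraph V) (k : ℕ) : Set (Sym2 V) :=
  {e ∈ H.edgeSet | ∃ (w : V) (c : H.Walk w w), c.IsCycle ∧ c.length ≤ k ∧ e ∈ c.edges}

lemma keepG_le (ω : Sym2 V → Bool) : keepG G ω ≤ G := fun _ _ h => h.1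

lemma eq_true_of_mem_edgeSet_keepG {ω : Sym2 V → Bool} {e : Sym2 V}
    (he : e ∈ (keepG G ω).edgeSet) : ω e = true := by
  induction e using Sym2.ind with
  | _ a b => exact he.2

lemma exists_isCycle_cons_of_mem_shortCycleEdges_keepG [DecidableEq V] [G.LocallyFinite]
    {ω : Sym2 V → Bool} {k : ℕ} {a b : V} (h : G.Adj a b)
    (hab : s(a, b) ∈ shortCycleEdges (keepG G ω) k) :
    ∃ m ∈ range (k - 1), ∃ q ∈ G.finsetWalkLength (m + 1) b a,
      (Walk.cons h q).IsCycle ∧ ∀ e ∈ (Walk.cons h q).edges, ω e = true := by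
  obtain ⟨-, w, c, hc, hck, hce⟩ := hab
  obtain ⟨h', q', hcyc, hlen⟩ := hc.exists_cons_of_mem_edges hce
  have hmap : Walk.cons h (q'.mapLe (keepG_le ω)) = (Walk.cons h' q').mapLe (keepG_le ω) := rfl
  have hq' : q'.length ≠ 0 := fun h0 => h.ne (Walk.eq_of_length_eq_zero h0).symm
  rw [Walk.length_cons] at hlen
  refine ⟨q'.length - 1, mem_range.mpr (by omega), q'.mapLe (keepG_le ω), ?_, ?_, ?_⟩
  · rw [mem_finsetWalkLength_iff, Walk.length_mapLe]
    omega
  · rwa [hmap, Walk.isCycle_mapLe]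
  · intro e he
    rw [hmap, Walk.edges_mapLe_eq_edges] at he
    exact eq_true_of_mem_edgeSet_keepG ((Walk.cons h' q').edges_subset_edgeSet he)

variable [Fintype V] [DecidableEq V] [DecidableRel G.Adj] {d k : ℕ} {p : ℝ}

lemma measureReal_mem_shortCycleEdges_keepG_le (hG : G.IsRegularOfDegree d) (hp0 : 0 ≤ p)
    (hp1 : p ≤ 1) {a b : V} (h : G.Adj a b) :
    (bernoulliProd (Sym2 V) p).real {ω | s(a, b) ∈ shortCycleEdges (keepG G ω) k} ≤
      ∑ m ∈ range (k - 1), d ^ m * p ^ (m + 2) := by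
  classical
  set μ := bernoulliProd (Sym2 V) p
  let closingCycles (m : ℕ) := {q ∈ G.finsetWalkLength (m + 1) b a | (Walk.cons h q).IsCycle}
  calc μ.real {ω | s(a, b) ∈ shortCycleEdges (keepG G ω) k}
      ≤ μ.real (⋃ m ∈ range (k - 1), ⋃ q ∈ closingCycles m,
          {ω | ∀ e ∈ (Walk.cons h q).edges.toFinset, ω e = true}) := by
        refine measureReal_mono (fun ω hω => ?_) (measure_ne_top _ _)
        obtain ⟨m, hm, q, hq, hcyc, hkept⟩ :=
          exists_isCycle_cons_of_mem_shortCycleEdges_keepG h hω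
        simp only [Set.mem_iUnion, Set.mem_ofPred_eq, List.mem_toFinset]
        exact ⟨m, hm, q, mem_filter.mpr ⟨hq, hcyc⟩, hkept⟩
    _ ≤ ∑ m ∈ range (k - 1), ∑ q ∈ closingCycles m,
          μ.real {ω | ∀ e ∈ (Walk.cons h q).edges.toFinset, ω e = true} :=
        (measureReal_biUnion_finset_le _ _).trans
          (sum_le_sum fun m _ => measureReal_biUnion_finset_le _ _)
    _ = ∑ m ∈ range (k - 1), #(closingCycles m) * p ^ (m + 2) := by
        refine sum_congr rfl fun m _ => ?_
        rw [← nsmul_eq_mul, ← sum_const]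
        refine sum_congr rfl fun q hq => ?_
        obtain ⟨hlen, hcyc⟩ := mem_filter.mp hq
        rw [bernoulliProd_real_setOf_forall_mem_eq_true hp0 hp1,
          List.toFinset_card_of_nodup hcyc.edges_nodup, Walk.length_edges, Walk.length_cons,
          mem_finsetWalkLength_iff.mp hlen]
    _ ≤ ∑ m ∈ range (k - 1), d ^ m * p ^ (m + 2) := by
        refine sum_le_sum fun m _ => ?_
        gcongr
        exact_mod_cast (card_filter_le _ _).trans (card_finsetWalkLength_succ_le_s4 hG m b a)

lemma integral_ncard_shortCycleEdges_keepG_le (hG : G.IsRegularOfDegree d) (hp0 : 0 ≤ p)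
    (hp1 : p ≤ 1) :
    ∫ ω, ((shortCycleEdges (keepG G ω) k).ncard : ℝ) ∂bernoulliProd (Sym2 V) p ≤
      #G.edgeFinset * ∑ m ∈ range (k - 1), d ^ m * p ^ (m + 2) := by
  classical
  have hcount : ∀ ω, ((shortCycleEdges (keepG G ω) k).ncard : ℝ) =
      ∑ e ∈ G.edgeFinset, {ω | e ∈ shortCycleEdges (keepG G ω) k}.indicator 1 ω := by
    intro ω
    have hsub : shortCycleEdges (keepG G ω) k =
        ↑(G.edgeFinset.filter (· ∈ shortCycleEdges (keepG G ω) k)) := by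
      ext e
      simp only [coe_filter, mem_edgeFinset, Set.mem_ofPred_eq, iff_and_self]
      exact fun he => edgeSet_mono (keepG_le ω) he.1
    rw [hsub, Set.ncard_coe_finset, card_filter, Nat.cast_sum]
    refine sum_congr rfl fun e _ => ?_
    simp [Set.indicator_apply]
  rw [integral_congr_ae (ae_of_all _ hcount),
    integral_finsetSum _ fun _ _ => Integrable.of_finite, ← nsmul_eq_mul, ← sum_const]
  refine sum_le_sum fun e he => ?_
  rw [integral_indicator_one MeasurableSet.of_discrete]
  induction e using Sym2.ind with
  | _ a b => exact measureReal_mem_shortCycleEdges_keepG_le hG hp0 hp1 (mem_edgeFinset.mp he)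

theorem integral_ncard_shortCycleEdges_keepG_le_of_regular (hG : G.IsRegularOfDegree d)
    (hd : 0 < d) {x : ℝ} (hx : 2 ≤ x) (hxd : x ≤ d) (hk : 2 ≤ k) :
    ∫ ω, ((shortCycleEdges (keepG G ω) k).ncard : ℝ) ∂bernoulliProd (Sym2 V) (x / d) ≤
      Fintype.card V * x ^ k / d := by
  have hdR : (0 : ℝ) < d := by exact_mod_cast hd
  have hedges : (#G.edgeFinset : ℝ) = Fintype.card V * d / 2 := by
    rw [eq_div_iff two_ne_zero, mul_comm]
    exact_mod_cast hG.two_mul_card_edgeFinset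
  calc _ ≤ #G.edgeFinset * ∑ m ∈ range (k - 1), (d : ℝ) ^ m * (x / d) ^ (m + 2) :=
        integral_ncard_shortCycleEdges_keepG_le hG (by positivity) ((div_le_one hdR).mpr hxd)
    _ ≤ Fintype.card V * d / 2 * (2 * x ^ k / d ^ 2) := by
        rw [hedges]
        gcongr
        exact sum_range_pow_mul_div_pow_le hx hdR hk
    _ = Fintype.card V * x ^ k / d := by field_simp

end RandomSubgraph

lemma two_le_mul_logb_and_pow_le {n d k : ℕ} {s α : ℝ} (hn : 4 ≤ n) (hs : 2 ≤ s) (hk : k ≠ 0)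
    (hlow : 16 * Real.logb 2 n ≤ α) (hup : α ≤ (d : ℝ) ^ ((1 : ℝ) / k) / Real.logb 2 s) :
    2 ≤ α * Real.logb 2 s ∧ (α * Real.logb 2 s) ^ k ≤ d := by
  have hL : 1 ≤ Real.logb 2 s := by
    rwa [Real.le_logb_iff_rpow_le one_lt_two (by linarith), Real.rpow_one]
  have hlogn : 2 ≤ Real.logb 2 n := by
    rw [Real.le_logb_iff_rpow_le one_lt_two (by positivity)]
    norm_num
    exact_mod_cast hn
  refine ⟨by nlinarith, ?_⟩
  have hαL : α * Real.logb 2 s ≤ (d : ℝ) ^ ((k : ℝ)⁻¹) := by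
    rwa [← one_div, ← le_div_iff₀ (by linarith)]
  calc (α * Real.logb 2 s) ^ k ≤ ((d : ℝ) ^ ((k : ℝ)⁻¹)) ^ k := by
        gcongr
        nlinarith
    _ = d := Real.rpow_inv_natCast_pow d.cast_nonneg hk

/-- there is an absolute constant `C > 0` such that, subsampling a
`d`-regular bipartite graph with `|A| = |B| = n/2` with probability
`p_α = α·log₂|Σ_A|/d` where `16·log₂ n ≤ α ≤ d^{1/k}/log₂|Σ_A|`, for all sufficiently
large `n`, with probability greater than `2/3` the number of sampled edges lying on a
simple cycle of length at most `k` is at most `C·n·(α·log₂|Σ_A|)^k/d`, which is at most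
`C·n`. -/
theorem few_bad_edges :
    ∃ C : ℝ, 0 < C ∧ ∃ N : ℕ, ∀ n : ℕ, N ≤ n →
    ∀ (A B SA : Type) [Fintype A] [Fintype B] [Fintype SA]
      [DecidableEq A] [DecidableEq B]
      (G : SimpleGraph (A ⊕ B)) (d k : ℕ) (α : ℝ),
      2 * Fintype.card A = n → 2 * Fintype.card B = n →
      (∀ a a' : A, ¬ G.Adj (Sum.inl a) (Sum.inl a')) →
      (∀ b b' : B, ¬ G.Adj (Sum.inr b) (Sum.inr b')) →
      (∀ w : A ⊕ B, (G.neighborSet w).ncard = d) →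
      2 ≤ Fintype.card SA → 4 ≤ k →
      16 * Real.logb 2 n ≤ α →
      α ≤ (d : ℝ) ^ ((1 : ℝ) / k) / Real.logb 2 (Fintype.card SA) →
      ((2 / 3 : ENNReal) <
        bernoulliProd (Sym2 (A ⊕ B)) (α * Real.logb 2 (Fintype.card SA) / d)
          {ω | ({e ∈ (keepG G ω).edgeSet | ∃ (w : A ⊕ B) (c : (keepG G ω).Walk w w),
                  c.IsCycle ∧ c.length ≤ k ∧ e ∈ c.edges}.ncard : ℝ)
                ≤ C * n * (α * Real.logb 2 (Fintype.card SA)) ^ k / d}) ∧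
      C * n * (α * Real.logb 2 (Fintype.card SA)) ^ k / d ≤ C * n := by
  refine ⟨8, by norm_num, 4, fun n hn A B SA _ _ _ _ _ G d k α hA hB _ _ hdeg hSA hk hlow hup => ?_⟩
  classical
  set x := α * Real.logb 2 (Fintype.card SA)
  obtain ⟨hx, hxk⟩ := two_le_mul_logb_and_pow_le hn (by exact_mod_cast hSA) (by omega) hlow hup
  have hxd : x ≤ d := (le_self_pow₀ (by linarith) (by omega)).trans hxk
  have hd : 0 < d := by exact_mod_cast (show (0 : ℝ) < d by linarith)
  have hG : G.IsRegularOfDegree d := fun v => by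
    rw [← card_neighborSet_eq_degree, ← Nat.card_eq_fintype_card, Nat.card_coe_set_eq, hdeg v]
  have hV : (Fintype.card (A ⊕ B) : ℝ) = n := by
    rw [Fintype.card_sum]; exact_mod_cast (by omega)
  have hxk0 : 0 < (n : ℝ) * x ^ k / d := by
    have : (4 : ℝ) ≤ n := by exact_mod_cast hn
    positivity
  refine ⟨two_thirds_lt_measure_le_of_three_mul_integral_lt (fun _ => by positivity)
    Integrable.of_finite ?_, ?_⟩
  · calc 3 * ∫ ω, ((shortCycleEdges (keepG G ω) k).ncard : ℝ) ∂bernoulliProd _ (x / d)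
        ≤ 3 * (n * x ^ k / d) := by
          rw [← hV]
          gcongr
          exact integral_ncard_shortCycleEdges_keepG_le_of_regular hG hd hx hxd (by omega)
      _ < 8 * n * x ^ k / d := by
          rw [show (8 : ℝ) * n * x ^ k / d = 8 * (n * x ^ k / d) by ring]
          linarith
  · rw [mul_div_assoc]
    exact mul_le_of_le_one_right (by positivity) (div_le_one_of_le₀ hxk d.cast_nonneg)
end

section
/- Let G = (A, B, E) be a bipartite Label Cover instance with |A| = |B| = n/2 in which every vertex has degree between d/2 and 2d for some d > 0. If the instance has a REP-cover of size β·n for some β > 0, then there exists a labeling (γ_A, γ_B) that satisfies at least a 1/(972·β²) fraction of the edges of E. -/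
/-!
Let `x a` and `y b` be the numbers of labels the cover offers at `a ∈ A` and `b ∈ B`, and label
every vertex uniformly at random from these lists. An edge `(a, b)` is then satisfied with
probability at least `1 / (x a * y b)`, so some labeling satisfies `∑_{(a,b) ∈ E} 1 / (x a * y b)`
edges. Since `1 / (u * v)` is convex on the positive quadrant, this sum is at least
`4 |E|³ / S²` for `S = ∑_{(a,b) ∈ E} (x a + y b)`, and the degree bounds give
`S ≤ 2d · βn ≤ 8β |E|`. Hence some labeling satisfies `|E| / (16 β²)` edges.
-/

/-- A REP-cover of a Label Cover instance `(E, π)` with alphabets `SA`, `SB`: a set of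
labelled vertices such that every edge has a pair of chosen labels satisfying its
relation. -/
def RepCover {A B SA SB : Type}
    (E : Finset (A × B)) (π : A × B → Finset (SA × SB))
    (C : Finset ((A × SA) ⊕ (B × SB))) : Prop :=
  ∀ f ∈ E, ∃ (α : SA) (β : SB),
    Sum.inl (f.1, α) ∈ C ∧ Sum.inr (f.2, β) ∈ C ∧ (α, β) ∈ π f

open Finset

-- The tangent plane of the convex function `(x, y) ↦ 1 / (x * y)` at `(t, t)`.
theorem three_div_sq_sub_div_cube_le_inv_mul {x y t : ℝ} (hx : 0 < x) (hy : 0 < y) (ht : 0 < t) :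
    3 / t ^ 2 - (x + y) / t ^ 3 ≤ (x * y)⁻¹ := by
  have amgm : 3 * t * (x * y) ≤ t ^ 3 + x * y * (x + y) := by
    rcases le_total (x + y) (3 * t) with h | h
    · nlinarith [mul_nonneg (sq_nonneg (x + y - 2 * t)) (by positivity : (0 : ℝ) ≤ x + y + t),
        mul_nonneg (sq_nonneg (x - y)) (sub_nonneg.2 h)]
    · nlinarith [mul_pos hx hy, pow_pos ht 3]
  rw [div_sub_div _ _ (by positivity) (by positivity), div_le_iff₀ (by positivity)]
  field_simp
  nlinarith [amgm]

theorem four_mul_card_pow_three_le {ι : Type*} (s : Finset ι) {u v : ι → ℝ}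
    (hu : ∀ i ∈ s, 0 < u i) (hv : ∀ i ∈ s, 0 < v i) :
    4 * (#s : ℝ) ^ 3 ≤ (∑ i ∈ s, (u i + v i)) ^ 2 * ∑ i ∈ s, (u i * v i)⁻¹ := by
  rcases s.eq_empty_or_nonempty with rfl | hs
  · simp
  set S := ∑ i ∈ s, (u i + v i)
  have hS : 0 < S := sum_pos (fun i hi => add_pos (hu i hi) (hv i hi)) hs
  have hN : (0 : ℝ) < #s := by exact_mod_cast hs.card_pos
  have tangent := sum_le_sum fun i hi =>
    three_div_sq_sub_div_cube_le_inv_mul (hu i hi) (hv i hi) (div_pos hS (mul_pos two_pos hN))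
  rw [sum_sub_distrib, sum_const, nsmul_eq_mul, ← sum_div] at tangent
  calc 4 * (#s : ℝ) ^ 3
      = S ^ 2 * (#s * (3 / (S / (2 * #s)) ^ 2) - S / (S / (2 * #s)) ^ 3) := by
        field_simp
        ring
    _ ≤ S ^ 2 * ∑ i ∈ s, (u i * v i)⁻¹ := by gcongr

section Fibres

variable {ι X : Type*} [Fintype X] [DecidableEq X] (s : Finset ι) (p : ι → X)

theorem card_mul_le_card_of_le_card_fiber {δ : ℝ} (h : ∀ x, δ ≤ #{i ∈ s | p i = x}) :
    Fintype.card X * δ ≤ #s := by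
  rw [card_eq_sum_card_fiberwise fun i _ => mem_univ (p i), ← nsmul_eq_mul, Nat.cast_sum]
  exact card_nsmul_le_sum _ _ _ fun x _ => h x

theorem sum_comp_le_mul_sum {w : X → ℝ} (hw : ∀ x, 0 ≤ w x) {D : ℝ}
    (h : ∀ x, #{i ∈ s | p i = x} ≤ D) : ∑ i ∈ s, w (p i) ≤ D * ∑ x, w x := by
  rw [← sum_fiberwise s p, mul_sum]
  refine sum_le_sum fun x _ => ?_
  rw [sum_congr rfl fun i hi => by rw [(mem_filter.1 hi).2], sum_const, nsmul_eq_mul]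
  exact mul_le_mul_of_nonneg_right (h x) (hw x)

end Fibres

theorem four_mul_card_le_sq_mul_sum_inv_mul {A B : Type*} [Fintype A] [Fintype B]
    [DecidableEq A] [DecidableEq B] (E : Finset (A × B)) {x : A → ℝ} {y : B → ℝ}
    (hx : ∀ a, 0 < x a) (hy : ∀ b, 0 < y b) {D c : ℝ}
    (hdegA : ∀ a, #{f ∈ E | f.1 = a} ≤ D) (hdegB : ∀ b, #{f ∈ E | f.2 = b} ≤ D)
    (hW : D * (∑ a, x a + ∑ b, y b) ≤ c * #E) :
    4 * (#E : ℝ) ≤ c ^ 2 * ∑ f ∈ E, (x f.1 * y f.2)⁻¹ := by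
  rcases E.eq_empty_or_nonempty with rfl | hE
  · simp
  have hN : (0 : ℝ) < #E := by exact_mod_cast hE.card_pos
  have hS : ∑ f ∈ E, (x f.1 + y f.2) ≤ c * #E := by
    rw [sum_add_distrib]
    refine le_trans ?_ hW
    rw [mul_add]
    exact add_le_add (sum_comp_le_mul_sum E Prod.fst (fun a => (hx a).le) hdegA)
      (sum_comp_le_mul_sum E Prod.snd (fun b => (hy b).le) hdegB)
  have hS₀ : 0 ≤ ∑ f ∈ E, (x f.1 + y f.2) :=
    sum_nonneg fun f _ => add_nonneg (hx f.1).le (hy f.2).le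
  have hconvex := four_mul_card_pow_three_le E (u := fun f => x f.1) (v := fun f => y f.2)
    (fun f _ => hx f.1) (fun f _ => hy f.2)
  have hsum₀ : 0 ≤ ∑ f ∈ E, (x f.1 * y f.2)⁻¹ :=
    sum_nonneg fun f _ => (inv_pos.2 (mul_pos (hx f.1) (hy f.2))).le
  refine le_of_mul_le_mul_right ?_ (pow_pos hN 2)
  calc 4 * (#E : ℝ) * #E ^ 2 ≤ (∑ f ∈ E, (x f.1 + y f.2)) ^ 2 * ∑ f ∈ E, (x f.1 * y f.2)⁻¹ := by
        linarith
    _ ≤ (c * #E) ^ 2 * ∑ f ∈ E, (x f.1 * y f.2)⁻¹ := by gcongr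
    _ = (c ^ 2 * ∑ f ∈ E, (x f.1 * y f.2)⁻¹) * #E ^ 2 := by ring

section Labels

variable {X L : Type*} [DecidableEq X] [DecidableEq L]

def labelsAt (S : Finset (X × L)) (x : X) : Finset L := {q ∈ S | q.1 = x}.image Prod.snd

@[simp]
theorem mem_labelsAt {S : Finset (X × L)} {x : X} {l : L} : l ∈ labelsAt S x ↔ (x, l) ∈ S := by
  simp [labelsAt, and_comm]

theorem sum_card_labelsAt [Fintype X] (S : Finset (X × L)) : ∑ x, #(labelsAt S x) = #S := by
  rw [card_eq_sum_card_fiberwise fun q _ => mem_univ q.1]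
  refine sum_congr rfl fun x _ => card_image_of_injOn ?_
  rintro ⟨x₁, l₁⟩ h₁ ⟨x₂, l₂⟩ h₂ (rfl : l₁ = l₂)
  simp_all

end Labels

namespace RepCover

variable {A B SA SB : Type} [DecidableEq A] [DecidableEq B] [DecidableEq SA] [DecidableEq SB]
  {E : Finset (A × B)} {π : A × B → Finset (SA × SB)} {C : Finset ((A × SA) ⊕ (B × SB))}

theorem exists_mem_labelsAt (hC : RepCover E π C) :
    ∀ f ∈ E, ∃ α ∈ labelsAt C.toLeft f.1, ∃ α' ∈ labelsAt C.toRight f.2, (α, α') ∈ π f := by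
  intro f hf
  obtain ⟨α, α', hα, hα', hπ⟩ := hC f hf
  exact ⟨α, by simpa using hα, α', by simpa using hα', hπ⟩

theorem labelsAt_toLeft_nonempty (hC : RepCover E π C) {a : A}
    (ha : {f ∈ E | f.1 = a}.Nonempty) : (labelsAt C.toLeft a).Nonempty := by
  obtain ⟨f, hf⟩ := ha
  obtain ⟨hfE, rfl⟩ := mem_filter.1 hf
  obtain ⟨α, hα, -⟩ := hC.exists_mem_labelsAt f hfE
  exact ⟨α, hα⟩

theorem labelsAt_toRight_nonempty (hC : RepCover E π C) {b : B}
    (hb : {f ∈ E | f.2 = b}.Nonempty) : (labelsAt C.toRight b).Nonempty := by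
  obtain ⟨f, hf⟩ := hb
  obtain ⟨hfE, rfl⟩ := mem_filter.1 hf
  obtain ⟨-, -, α', hα', -⟩ := hC.exists_mem_labelsAt f hfE
  exact ⟨α', hα'⟩

end RepCover

theorem card_piFinset_eq_card_mul_card_filter {ι α : Type*} [Fintype ι] [DecidableEq ι]
    [DecidableEq α] (L : ι → Finset α) {i : ι} {a : α} (ha : a ∈ L i) :
    #(Fintype.piFinset L) = #(L i) * #{γ ∈ Fintype.piFinset L | γ i = a} := by
  rw [Fintype.card_piFinset, Fintype.card_filter_piFinset_eq_of_mem L i ha,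
    mul_prod_erase _ (fun j => #(L j)) (mem_univ i)]

theorem exists_labeling_sum_inv_le {A B SA SB : Type*} [Fintype A] [Fintype B]
    [DecidableEq A] [DecidableEq B] [DecidableEq SA] [DecidableEq SB]
    (E : Finset (A × B)) (π : A × B → Finset (SA × SB)) (LA : A → Finset SA)
    (LB : B → Finset SB) (hLA : ∀ a, (LA a).Nonempty) (hLB : ∀ b, (LB b).Nonempty)
    (hcov : ∀ f ∈ E, ∃ α ∈ LA f.1, ∃ β ∈ LB f.2, (α, β) ∈ π f) :
    ∃ (γA : A → SA) (γB : B → SB),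
      ∑ f ∈ E, ((#(LA f.1) : ℝ) * #(LB f.2))⁻¹ ≤ #{f ∈ E | (γA f.1, γB f.2) ∈ π f} := by
  set Γ := Fintype.piFinset LA ×ˢ Fintype.piFinset LB
  have hΓ : Γ.Nonempty :=
    (Fintype.piFinset_nonempty.2 hLA).product (Fintype.piFinset_nonempty.2 hLB)
  have hedge : ∀ f ∈ E, (#Γ : ℝ) * ((#(LA f.1) : ℝ) * #(LB f.2))⁻¹ ≤
      #{γ ∈ Γ | (γ.1 f.1, γ.2 f.2) ∈ π f} := by
    intro f hf
    obtain ⟨α, hα, β, hβ, hπ⟩ := hcov f hf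
    have hsub : {γ ∈ Fintype.piFinset LA | γ f.1 = α} ×ˢ {γ ∈ Fintype.piFinset LB | γ f.2 = β}
        ⊆ {γ ∈ Γ | (γ.1 f.1, γ.2 f.2) ∈ π f} := by
      intro γ hγ
      simp only [Γ, mem_product, mem_filter] at hγ ⊢
      exact ⟨⟨hγ.1.1, hγ.2.1⟩, hγ.1.2 ▸ hγ.2.2 ▸ hπ⟩
    have hα₀ : (0 : ℝ) < #(LA f.1) := by exact_mod_cast (hLA f.1).card_pos
    have hβ₀ : (0 : ℝ) < #(LB f.2) := by exact_mod_cast (hLB f.2).card_pos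
    calc (#Γ : ℝ) * ((#(LA f.1) : ℝ) * #(LB f.2))⁻¹
        = #{γ ∈ Fintype.piFinset LA | γ f.1 = α} * #{γ ∈ Fintype.piFinset LB | γ f.2 = β} := by
          rw [card_product, card_piFinset_eq_card_mul_card_filter LA hα,
            card_piFinset_eq_card_mul_card_filter LB hβ]
          push_cast
          field_simp
      _ ≤ #{γ ∈ Γ | (γ.1 f.1, γ.2 f.2) ∈ π f} := by
          exact_mod_cast (card_product _ _).symm.trans_le (card_le_card hsub)
  have hcount : ∑ γ ∈ Γ, #{f ∈ E | (γ.1 f.1, γ.2 f.2) ∈ π f} =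
      ∑ f ∈ E, #{γ ∈ Γ | (γ.1 f.1, γ.2 f.2) ∈ π f} :=
    sum_card_bipartiteAbove_eq_sum_card_bipartiteBelow
      fun (γ : (A → SA) × (B → SB)) (f : A × B) => (γ.1 f.1, γ.2 f.2) ∈ π f
  obtain ⟨γ, -, hγ⟩ := exists_le_of_sum_le hΓ
    (f := fun _ => ∑ f ∈ E, ((#(LA f.1) : ℝ) * #(LB f.2))⁻¹)
    (g := fun γ => (#{f ∈ E | (γ.1 f.1, γ.2 f.2) ∈ π f} : ℝ)) <| by
    rw [sum_const, nsmul_eq_mul, mul_sum, ← Nat.cast_sum, hcount, Nat.cast_sum]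
    exact sum_le_sum hedge
  exact ⟨γ.1, γ.2, hγ⟩

theorem labeling_from_repCover_general {A B SA SB : Type}
    [Fintype A] [Fintype B]
    [DecidableEq A] [DecidableEq B] [DecidableEq SA] [DecidableEq SB]
    (E : Finset (A × B)) (π : A × B → Finset (SA × SB))
    (n : ℕ) (d β : ℝ) (hd : 0 < d) (hβ : 0 < β)
    (hA : 2 * Fintype.card A = n)
    (hdegA : ∀ a : A, d / 2 ≤ ((E.filter fun f => f.1 = a).card : ℝ) ∧
      ((E.filter fun f => f.1 = a).card : ℝ) ≤ 2 * d)
    (hdegB : ∀ b : B, d / 2 ≤ ((E.filter fun f => f.2 = b).card : ℝ) ∧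
      ((E.filter fun f => f.2 = b).card : ℝ) ≤ 2 * d)
    (C : Finset ((A × SA) ⊕ (B × SB)))
    (hC : RepCover E π C) (hCcard : (C.card : ℝ) = β * n) :
    ∃ (γA : A → SA) (γB : B → SB),
      (E.card : ℝ) / (972 * β ^ 2) ≤
        ((E.filter fun f => (γA f.1, γB f.2) ∈ π f).card : ℝ) := by
  set x := labelsAt C.toLeft
  set y := labelsAt C.toRight
  have hx : ∀ a, (x a).Nonempty := fun a => hC.labelsAt_toLeft_nonempty <| card_pos.1 <| by
    exact_mod_cast (half_pos hd).trans_le (hdegA a).1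
  have hy : ∀ b, (y b).Nonempty := fun b => hC.labelsAt_toRight_nonempty <| card_pos.1 <| by
    exact_mod_cast (half_pos hd).trans_le (hdegB b).1
  obtain ⟨γA, γB, hγ⟩ := exists_labeling_sum_inv_le E π x y hx hy hC.exists_mem_labelsAt
  refine ⟨γA, γB, le_trans ?_ hγ⟩
  have hlabels : ∑ a, (#(x a) : ℝ) + ∑ b, (#(y b) : ℝ) = β * n := by
    rw [← hCcard, ← card_toLeft_add_card_toRight, ← sum_card_labelsAt, ← sum_card_labelsAt]
    push_cast
    rfl
  have hE : (n : ℝ) * d ≤ 4 * #E := by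
    have := card_mul_le_card_of_le_card_fiber E Prod.fst fun a => (hdegA a).1
    rw [← hA]
    push_cast
    linarith
  have hW : 2 * d * (∑ a, (#(x a) : ℝ) + ∑ b, (#(y b) : ℝ)) ≤ 8 * β * #E := by
    rw [hlabels]
    nlinarith
  have hlower := four_mul_card_le_sq_mul_sum_inv_mul E (x := fun a => #(x a)) (y := fun b => #(y b))
    (fun a => by exact_mod_cast (hx a).card_pos) (fun b => by exact_mod_cast (hy b).card_pos)
    (fun a => (hdegA a).2) (fun b => (hdegB b).2) hW
  have hsum₀ : 0 ≤ ∑ f ∈ E, ((#(x f.1) : ℝ) * #(y f.2))⁻¹ := sum_nonneg fun f _ => by positivity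
  rw [div_le_iff₀ (by positivity)]
  nlinarith

/-- if a Label Cover instance with `|A| = |B| = n/2` and all degrees between
`d/2` and `2d` has a REP-cover of size `β·n`, then some labeling satisfies at least a
`1/(972 β²)` fraction of the edges. -/
theorem labeling_from_repCover {A B SA SB : Type}
    [Fintype A] [Fintype B] [Fintype SA] [Fintype SB]
    [DecidableEq A] [DecidableEq B] [DecidableEq SA] [DecidableEq SB]
    (E : Finset (A × B)) (π : A × B → Finset (SA × SB))
    (n : ℕ) (d β : ℝ) (hd : 0 < d) (hβ : 0 < β)
    (hA : 2 * Fintype.card A = n) (hB : 2 * Fintype.card B = n)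
    (hdegA : ∀ a : A, d / 2 ≤ ((E.filter fun f => f.1 = a).card : ℝ) ∧
      ((E.filter fun f => f.1 = a).card : ℝ) ≤ 2 * d)
    (hdegB : ∀ b : B, d / 2 ≤ ((E.filter fun f => f.2 = b).card : ℝ) ∧
      ((E.filter fun f => f.2 = b).card : ℝ) ≤ 2 * d)
    (C : Finset ((A × SA) ⊕ (B × SB)))
    (hC : RepCover E π C) (hCcard : (C.card : ℝ) = β * n) :
    ∃ (γA : A → SA) (γB : B → SB),
      (E.card : ℝ) / (972 * β ^ 2) ≤
        ((E.filter fun f => (γA f.1, γB f.2) ∈ π f).card : ℝ) :=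
  labeling_from_repCover_general E π n d β hd hβ hA hdegA hdegB C hC hCcard
end
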